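/- There is a universal constant C > 0 with the following property. Let (α_n) ⊆ 𝔻 be Verblunsky coefficients, let [c,d] ⊆ [a,b] be finite intervals in ℤ with a < c < d < b, let β, β̃, γ, γ̃, z ∈ ∂𝔻, let k ∈ [c,d] and ℓ ∈ [a,b] \ [c,d], and suppose that z·(ℒ^{[a,b]}_{β,β̃})* − ℳ^{[a,b]}_{β,β̃} and z·(ℒ^{[c,d]}_{γ,γ̃})* − ℳ^{[c,d]}_{γ,γ̃} are invertible. Then |G^{[a,b]}_{β,β̃}(z; k, ℓ)| ≤ C · (sup_{n ∈ {c, c+1, d−1, d}} |G^{[c,d]}_{γ,γ̃}(z; k, n)|) · (sup_{m ∈ {c−1, c, c+1, d−1, d, d+1}} |G^{[a,b]}_{β,β̃}(z; m, ℓ)|). -/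

import Mathlib

open MeasureTheory Complex Filter
open scoped Matrix.Norms.L2Operator

noncomputable section
/-- `ρ_n = √(1 - |α_n|²)`. -/
def rhoV (α : ℤ → ℂ) (n : ℤ) : ℝ := Real.sqrt (1 - ‖α n‖^2)

/-- entries of `ℒ = ⊕_{n even} Θ_n`. -/
def cmvLent (α : ℤ → ℂ) (m k : ℤ) : ℂ :=
  if m % 2 = 0 then
    if k = m then starRingEnd ℂ (α m) else if k = m + 1 then (rhoV α m : ℂ) else 0
  else
    if k = m - 1 then (rhoV α (m-1) : ℂ) else if k = m then -α (m-1) else 0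

/-- entries of `ℳ = ⊕_{n odd} Θ_n`. -/
def cmvMent (α : ℤ → ℂ) (m k : ℤ) : ℂ :=
  if m % 2 ≠ 0 then
    if k = m then starRingEnd ℂ (α m) else if k = m + 1 then (rhoV α m : ℂ) else 0
  else
    if k = m - 1 then (rhoV α (m-1) : ℂ) else if k = m then -α (m-1) else 0

/-- Verblunsky coefficients with boundary conditions `α_{a-1} = β`, `α_b = β̃`. -/
def bcV (α : ℤ → ℂ) (β β' : ℂ) (a b : ℤ) (n : ℤ) : ℂ :=
  if n = a - 1 then β else if n = b then β' else α n

/-- the restriction `ℒ^{[a,b]}_{β,β̃}`. -/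
def cmvLmat (α : ℤ → ℂ) (β β' : ℂ) (a b : ℤ) :
    Matrix ↥(Finset.Icc a b) ↥(Finset.Icc a b) ℂ :=
  Matrix.of fun i j => cmvLent (bcV α β β' a b) (i:ℤ) (j:ℤ)

/-- the restriction `ℳ^{[a,b]}_{β,β̃}`. -/
def cmvMmat (α : ℤ → ℂ) (β β' : ℂ) (a b : ℤ) :
    Matrix ↥(Finset.Icc a b) ↥(Finset.Icc a b) ℂ :=
  Matrix.of fun i j => cmvMent (bcV α β β' a b) (i:ℤ) (j:ℤ)

/-- the restriction `ℰ^{[a,b]}_{β,β̃} = ℒ^{[a,b]}·ℳ^{[a,b]}`. -/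
def cmvEmat (α : ℤ → ℂ) (β β' : ℂ) (a b : ℤ) :
    Matrix ↥(Finset.Icc a b) ↥(Finset.Icc a b) ℂ :=
  cmvLmat α β β' a b * cmvMmat α β β' a b

/-- the matrix `z (ℒ^{[a,b]})* − ℳ^{[a,b]}`. -/
def cmvAmat (z : ℂ) (α : ℤ → ℂ) (β β' : ℂ) (a b : ℤ) :
    Matrix ↥(Finset.Icc a b) ↥(Finset.Icc a b) ℂ :=
  z • (cmvLmat α β β' a b).conjTranspose - cmvMmat α β β' a b

/-- the Green's function `G^{[a,b]}_{β,β̃}(z; k, ℓ)`. -/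
def cmvGreen (z : ℂ) (α : ℤ → ℂ) (β β' : ℂ) (a b : ℤ)
    (k l : ↥(Finset.Icc a b)) : ℂ :=
  (cmvAmat z α β β' a b)⁻¹ k l

/-- `[a,b]` is `(γ, Γ, p)`-suitable for `ℰ_{β,β̃} − z`. -/
def CmvSuitable (α : ℤ → ℂ) (β β' z : ℂ) (a b : ℤ) (γ Γ : ℝ) (p : ℤ) : Prop :=
  IsUnit (cmvEmat α β β' a b - z • (1 : Matrix ↥(Finset.Icc a b) ↥(Finset.Icc a b) ℂ)) ∧
  ‖(cmvEmat α β β' a b - z • (1 : Matrix ↥(Finset.Icc a b) ↥(Finset.Icc a b) ℂ))⁻¹‖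
    ≤ (2:ℝ)^(-p) * Real.exp Γ ∧
  ∀ k l : ↥(Finset.Icc a b), ((b:ℝ) - (a:ℝ))/2 ≤ |((k:ℤ):ℝ) - ((l:ℤ):ℝ)| →
    ‖cmvGreen z α β β' a b k l‖ ≤ (2:ℝ)^(-(p+1)) * Real.exp (-γ * |((k:ℤ):ℝ) - ((l:ℤ):ℝ)|)
/-
For `k ∈ [c,d]` and `ℓ ∉ [c,d]`, write `A`, `B` for the matrices `z ℒ* − ℳ` on `[a,b]` and on
`[c,d]`, and `P` for the restriction of `ℓ²([a,b])` to `ℓ²([c,d])`. The second resolvent identity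
`P A⁻¹ − B⁻¹ P = B⁻¹ (B P − P A) A⁻¹`, read at `(k, ℓ)`, loses its term `B⁻¹ P` because
`ℓ ∉ [c,d]`. The CMV matrices are five-diagonal, and their entries at `(n, m)` only see the
coefficients `α_{n-1}, α_n, α_{m-1}, α_m`, so the coupling `B P − P A` vanishes except on the
rows `n ∈ {c, c+1, d-1, d}` and the columns `m ∈ {c-1, …, d+1}`, where its entries are at most
`4`. This gives the bound with `C = 4 · 6 · 4`.
-/

namespace Matrix

variable {ι κ R : Type*}

section CommRing

variable [CommRing R] [DecidableEq ι]

theorem inv_mul_sub_mul_mul_inv [Fintype ι] [Fintype κ] [DecidableEq κ] {A : Matrix ι ι R}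
    {B : Matrix κ κ R} (hA : IsUnit A.det) (hB : IsUnit B.det) (P : Matrix κ ι R) :
    B⁻¹ * (B * P - P * A) * A⁻¹ = P * A⁻¹ - B⁻¹ * P := by
  rw [Matrix.mul_sub, Matrix.sub_mul, ← Matrix.mul_assoc, nonsing_inv_mul _ hB, Matrix.one_mul,
    Matrix.mul_assoc, Matrix.mul_assoc, mul_nonsing_inv _ hA, Matrix.mul_one]

theorem submatrix_one_mul_apply [Fintype ι] {ι' : Type*} (e : κ → ι) (X : Matrix ι ι' R)
    (n : κ) (i : ι') : ((1 : Matrix ι ι R).submatrix e id * X) n i = X (e n) i := by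
  simp [mul_apply, one_apply]

theorem mul_submatrix_one_apply_self [Fintype κ] {κ' : Type*} (e : κ ↪ ι) (X : Matrix κ' κ R)
    (n : κ') (m : κ) : (X * (1 : Matrix ι ι R).submatrix e id) n (e m) = X n m := by
  classical
  simp [mul_apply, one_apply]

theorem mul_submatrix_one_apply_of_notMem_range [Fintype κ] {κ' : Type*} (e : κ → ι)
    (X : Matrix κ' κ R) (n : κ') {i : ι} (hi : i ∉ Set.range e) :
    (X * (1 : Matrix ι ι R).submatrix e id) n i = 0 := by
  have hne : ∀ m, e m ≠ i := fun m h => hi ⟨m, h⟩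
  simp [mul_apply, hne]

theorem inv_apply_of_notMem_range [Fintype ι] [Fintype κ] [DecidableEq κ] {A : Matrix ι ι R}
    {B : Matrix κ κ R} (hA : IsUnit A.det) (hB : IsUnit B.det) (e : κ → ι) (k : κ) {l : ι}
    (hl : l ∉ Set.range e) :
    A⁻¹ (e k) l = (B⁻¹ * (B * (1 : Matrix ι ι R).submatrix e id
      - (1 : Matrix ι ι R).submatrix e id * A) * A⁻¹) k l := by
  rw [inv_mul_sub_mul_mul_inv hA hB, sub_apply, submatrix_one_mul_apply,
    mul_submatrix_one_apply_of_notMem_range e _ _ hl, sub_zero]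

end CommRing

theorem norm_mul_mul_apply_le [Fintype ι] [Fintype κ] {κ' ι' : Type*} [NormedRing R]
    (X : Matrix κ' κ R) (Γ : Matrix κ ι R) (Y : Matrix ι ι' R) {N : Finset κ} {M : Finset ι}
    {g s t : ℝ} (hΓ : ∀ n i, n ∉ N ∨ i ∉ M → Γ n i = 0) (hg : ∀ n i, ‖Γ n i‖ ≤ g)
    {k : κ'} {l : ι'} (hX : ∀ n ∈ N, ‖X k n‖ ≤ s) (hY : ∀ i ∈ M, ‖Y i l‖ ≤ t) :
    ‖(X * Γ * Y) k l‖ ≤ N.card * M.card * g * s * t := by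
  have hsum : (X * Γ * Y) k l = ∑ i ∈ M, ∑ n ∈ N, X k n * Γ n i * Y i l := by
    simp only [mul_apply, Finset.sum_mul]
    rw [(Finset.sum_subset (Finset.subset_univ M) fun i _ hi => by
      simp [hΓ _ i (Or.inr hi)]).symm]
    refine Finset.sum_congr rfl fun i _ => (Finset.sum_subset (Finset.subset_univ N)
      fun n _ hn => by simp [hΓ n i (Or.inl hn)]).symm
  have hterm : ∀ i ∈ M, ∀ n ∈ N, ‖X k n * Γ n i * Y i l‖ ≤ s * g * t := by
    intro i hi n hn
    have hs : 0 ≤ s := (norm_nonneg _).trans (hX n hn)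
    have hg₀ : 0 ≤ g := (norm_nonneg _).trans (hg n i)
    calc ‖X k n * Γ n i * Y i l‖ ≤ ‖X k n‖ * ‖Γ n i‖ * ‖Y i l‖ := norm_mul₃_le
      _ ≤ s * g * t := by gcongr <;> simp_all
  calc ‖(X * Γ * Y) k l‖ ≤ ∑ i ∈ M, ∑ n ∈ N, ‖X k n * Γ n i * Y i l‖ := by
        rw [hsum]
        exact (norm_sum_le _ _).trans (Finset.sum_le_sum fun i _ => norm_sum_le _ _)
    _ ≤ ∑ i ∈ M, ∑ n ∈ N, s * g * t :=
        Finset.sum_le_sum fun i hi => Finset.sum_le_sum (hterm i hi)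
    _ = N.card * M.card * g * s * t := by simp only [Finset.sum_const, nsmul_eq_mul]; ring

end Matrix

def cmvAent (z : ℂ) (α : ℤ → ℂ) (n m : ℤ) : ℂ :=
  z * starRingEnd ℂ (cmvLent α m n) - cmvMent α n m

theorem cmvAmat_apply (z : ℂ) (α : ℤ → ℂ) (β β' : ℂ) (a b : ℤ) (i j : Finset.Icc a b) :
    cmvAmat z α β β' a b i j = cmvAent z (bcV α β β' a b) i j := by
  simp [cmvAmat, cmvAent, cmvLmat, cmvMmat, smul_eq_mul]

section Entries

variable {α α₁ α₂ : ℤ → ℂ} {z : ℂ} {n m : ℤ}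

theorem cmvLent_eq_zero (h : n + 1 < m ∨ m + 1 < n) : cmvLent α m n = 0 := by
  simp only [cmvLent]
  split_ifs <;> first | rfl | omega

theorem cmvMent_eq_zero (h : n + 1 < m ∨ m + 1 < n) : cmvMent α n m = 0 := by
  simp only [cmvMent]
  split_ifs <;> first | rfl | omega

theorem cmvAent_eq_zero (h : n + 1 < m ∨ m + 1 < n) : cmvAent z α n m = 0 := by
  simp [cmvAent, cmvLent_eq_zero h, cmvMent_eq_zero h]

theorem abs_rhoV_le_one (α : ℤ → ℂ) (n : ℤ) : |rhoV α n| ≤ 1 := by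
  rw [rhoV, abs_of_nonneg (Real.sqrt_nonneg _)]
  exact Real.sqrt_le_one.mpr (by linarith [sq_nonneg ‖α n‖])

theorem norm_cmvLent_le_one (hα : ∀ i, ‖α i‖ ≤ 1) (m k : ℤ) : ‖cmvLent α m k‖ ≤ 1 := by
  unfold cmvLent
  split_ifs <;> simp [abs_rhoV_le_one, hα]

theorem norm_cmvMent_le_one (hα : ∀ i, ‖α i‖ ≤ 1) (m k : ℤ) : ‖cmvMent α m k‖ ≤ 1 := by
  unfold cmvMent
  split_ifs <;> simp [abs_rhoV_le_one, hα]

theorem norm_cmvAent_le_two (hz : ‖z‖ = 1) (hα : ∀ i, ‖α i‖ ≤ 1) (n m : ℤ) :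
    ‖cmvAent z α n m‖ ≤ 2 :=
  calc ‖cmvAent z α n m‖ ≤ ‖z‖ * ‖cmvLent α m n‖ + ‖cmvMent α n m‖ := by
        simpa [cmvAent] using norm_sub_le (z * starRingEnd ℂ (cmvLent α m n)) (cmvMent α n m)
    _ ≤ 1 * 1 + 1 := by
        rw [hz]
        gcongr
        exacts [norm_cmvLent_le_one hα m n, norm_cmvMent_le_one hα n m]
    _ = 2 := by norm_num

theorem cmvAent_congr (hn : α₁ n = α₂ n) (hn' : α₁ (n - 1) = α₂ (n - 1)) (hm : α₁ m = α₂ m)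
    (hm' : α₁ (m - 1) = α₂ (m - 1)) : cmvAent z α₁ n m = cmvAent z α₂ n m := by
  simp only [cmvAent, cmvLent, cmvMent, rhoV, hn, hn', hm, hm']

end Entries

theorem bcV_of_mem_Ico (α : ℤ → ℂ) (β β' : ℂ) {a b i : ℤ} (hi : i ∈ Finset.Ico a b) :
    bcV α β β' a b i = α i := by
  rw [Finset.mem_Ico] at hi
  simp [bcV, show i ≠ a - 1 by omega, hi.2.ne]

theorem norm_bcV_le_one {α : ℤ → ℂ} {β β' : ℂ} (hα : ∀ n, ‖α n‖ < 1) (hβ : ‖β‖ = 1)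
    (hβ' : ‖β'‖ = 1) (a b i : ℤ) : ‖bcV α β β' a b i‖ ≤ 1 := by
  unfold bcV
  split_ifs
  exacts [hβ.le, hβ'.le, (hα i).le]

theorem cmvAent_bcV (z : ℂ) (α : ℤ → ℂ) (β β' : ℂ) {a b n m : ℤ}
    (hn : n ∈ Finset.Icc (a + 1) (b - 1)) (hm : m ∈ Finset.Icc (a + 1) (b - 1)) :
    cmvAent z (bcV α β β' a b) n m = cmvAent z α n m := by
  rw [Finset.mem_Icc] at hn hm
  apply cmvAent_congr <;> exact bcV_of_mem_Ico α β β' (Finset.mem_Ico.mpr (by omega))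

theorem Finset.card_subtype_le {α : Type*} (s : Finset α) (p : α → Prop) [DecidablePred p] :
    (s.subtype p).card ≤ s.card :=
  (Finset.card_subtype p s).trans_le (Finset.card_filter_le s p)

def Finset.embeddingOfSubset {α : Type*} {s t : Finset α} (h : s ⊆ t) : s ↪ t :=
  Subtype.impEmbedding _ _ fun _ hx => h hx

section Coupling

variable (z : ℂ) (α : ℤ → ℂ) (β β' γ γ' : ℂ) {a b c d : ℤ}

def cmvCoupling (h : Finset.Icc c d ⊆ Finset.Icc a b) :
    Matrix (Finset.Icc c d) (Finset.Icc a b) ℂ :=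
  cmvAmat z α γ γ' c d * (1 : Matrix (Finset.Icc a b) (Finset.Icc a b) ℂ).submatrix
      (Finset.embeddingOfSubset h) id
    - (1 : Matrix (Finset.Icc a b) (Finset.Icc a b) ℂ).submatrix (Finset.embeddingOfSubset h) id
      * cmvAmat z α β β' a b

theorem cmvCoupling_apply (h : Finset.Icc c d ⊆ Finset.Icc a b) (n : Finset.Icc c d)
    (i : Finset.Icc a b) :
    cmvCoupling z α β β' γ γ' h n i =
      (if (i : ℤ) ∈ Finset.Icc c d then cmvAent z (bcV α γ γ' c d) n i else 0)
        - cmvAent z (bcV α β β' a b) n i := by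
  rw [cmvCoupling, Matrix.sub_apply, Matrix.submatrix_one_mul_apply, cmvAmat_apply]
  split_ifs with hi
  · have hi' : i = Finset.embeddingOfSubset h ⟨i, hi⟩ := rfl
    rw [hi', Matrix.mul_submatrix_one_apply_self, cmvAmat_apply]
    rfl
  · rw [Matrix.mul_submatrix_one_apply_of_notMem_range _ _ _ fun ⟨m, hm⟩ => hi (hm ▸ m.2)]
    rfl

theorem cmvCoupling_apply_eq_zero (hac : a < c) (hdb : d < b)
    (h : Finset.Icc c d ⊆ Finset.Icc a b) (n : Finset.Icc c d) (i : Finset.Icc a b)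
    (hni : (n : ℤ) ∉ ({c, c + 1, d - 1, d} : Finset ℤ) ∨
      (i : ℤ) ∉ ({c - 1, c, c + 1, d - 1, d, d + 1} : Finset ℤ)) :
    cmvCoupling z α β β' γ γ' h n i = 0 := by
  obtain ⟨n, hn⟩ := n
  obtain ⟨m, hm⟩ := i
  rw [cmvCoupling_apply]
  dsimp only at hni ⊢
  by_cases hband : n + 1 < m ∨ m + 1 < n
  · rw [cmvAent_eq_zero hband, cmvAent_eq_zero hband, ite_self, sub_zero]
  · have hinner : n ∈ Finset.Icc (c + 1) (d - 1) ∧ m ∈ Finset.Icc (c + 1) (d - 1) := by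
      simp only [Finset.mem_Icc, Finset.mem_insert, Finset.mem_singleton] at hn hni ⊢
      omega
    have hsub : Finset.Icc (c + 1) (d - 1) ⊆ Finset.Icc (a + 1) (b - 1) :=
      Finset.Icc_subset_Icc (by omega) (by omega)
    rw [if_pos (Finset.Icc_subset_Icc (by omega) (by omega) hinner.2),
      cmvAent_bcV z α γ γ' hinner.1 hinner.2,
      cmvAent_bcV z α β β' (hsub hinner.1) (hsub hinner.2), sub_self]

theorem norm_cmvCoupling_apply_le (hz : ‖z‖ = 1) (hα : ∀ n, ‖α n‖ < 1) (hβ : ‖β‖ = 1)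
    (hβ' : ‖β'‖ = 1) (hγ : ‖γ‖ = 1) (hγ' : ‖γ'‖ = 1) (h : Finset.Icc c d ⊆ Finset.Icc a b)
    (n : Finset.Icc c d) (i : Finset.Icc a b) : ‖cmvCoupling z α β β' γ γ' h n i‖ ≤ 4 := by
  have hA := norm_cmvAent_le_two hz (norm_bcV_le_one hα hβ hβ' a b) n i
  have hB : ‖if (i : ℤ) ∈ Finset.Icc c d then cmvAent z (bcV α γ γ' c d) n i else 0‖ ≤ 2 := by
    split_ifs
    exacts [norm_cmvAent_le_two hz (norm_bcV_le_one hα hγ hγ' c d) n i, by simp]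
  rw [cmvCoupling_apply]
  linarith [norm_sub_le (if (i : ℤ) ∈ Finset.Icc c d then cmvAent z (bcV α γ γ' c d) n i else 0)
    (cmvAent z (bcV α β β' a b) n i)]

theorem cmvGreen_eq_inv_mul_cmvCoupling_mul_inv (h : Finset.Icc c d ⊆ Finset.Icc a b)
    (hA : IsUnit (cmvAmat z α β β' a b)) (hB : IsUnit (cmvAmat z α γ γ' c d)) {k l : ℤ}
    (hk : k ∈ Finset.Icc c d) (hkab : k ∈ Finset.Icc a b) (hl : l ∈ Finset.Icc a b)
    (hlcd : l ∉ Finset.Icc c d) :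
    cmvGreen z α β β' a b ⟨k, hkab⟩ ⟨l, hl⟩ = ((cmvAmat z α γ γ' c d)⁻¹
      * cmvCoupling z α β β' γ γ' h * (cmvAmat z α β β' a b)⁻¹) ⟨k, hk⟩ ⟨l, hl⟩ :=
  Matrix.inv_apply_of_notMem_range ((Matrix.isUnit_iff_isUnit_det _).mp hA)
    ((Matrix.isUnit_iff_isUnit_det _).mp hB) (Finset.embeddingOfSubset h) ⟨k, hk⟩
    fun ⟨m, hm⟩ => hlcd (by obtain rfl := congrArg Subtype.val hm; exact m.2)

end Coupling

/-- the Green's function on a large interval `[a,b]` at `(k,ℓ)`, with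
`k ∈ [c,d] ⊆ [a,b]` and `ℓ ∈ [a,b] \ [c,d]`, is bounded by a universal constant times the
product of the small-scale Green's function near `k` and the large-scale Green's function
at the edges of `[c,d]`. -/
theorem cmv_green_two_scales :
    ∃ C > (0:ℝ),
      ∀ (α : ℤ → ℂ), (∀ n, ‖α n‖ < 1) →
      ∀ (β β' γc γc' z : ℂ), ‖β‖ = 1 → ‖β'‖ = 1 → ‖γc‖ = 1 → ‖γc'‖ = 1 → ‖z‖ = 1 →
      ∀ (a b c d : ℤ), a < c → c < d → d < b →
      ∀ (k l : ℤ) (hk : k ∈ Finset.Icc c d) (hkab : k ∈ Finset.Icc a b)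
        (hl : l ∈ Finset.Icc a b), l ∉ Finset.Icc c d →
      IsUnit (cmvAmat z α β β' a b) → IsUnit (cmvAmat z α γc γc' c d) →
      ∀ (s1 s2 : ℝ), 0 ≤ s1 → 0 ≤ s2 →
        (∀ n (hn : n ∈ Finset.Icc c d), n ∈ ({c, c+1, d-1, d} : Finset ℤ) →
          ‖cmvGreen z α γc γc' c d ⟨k, hk⟩ ⟨n, hn⟩‖ ≤ s1) →
        (∀ m (hm : m ∈ Finset.Icc a b), m ∈ ({c-1, c, c+1, d-1, d, d+1} : Finset ℤ) →
          ‖cmvGreen z α β β' a b ⟨m, hm⟩ ⟨l, hl⟩‖ ≤ s2) →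
        ‖cmvGreen z α β β' a b ⟨k, hkab⟩ ⟨l, hl⟩‖ ≤ C * s1 * s2 := by
  refine ⟨4 * 6 * 4, by norm_num, ?_⟩
  intro α hα β β' γ γ' z hβ hβ' hγ hγ' hz a b c d hac _ hdb k l hk hkab hl hlcd hA hB s₁ s₂
    hs₁ hs₂ hG₁ hG₂
  have h : Finset.Icc c d ⊆ Finset.Icc a b := Finset.Icc_subset_Icc hac.le hdb.le
  set N := ({c, c + 1, d - 1, d} : Finset ℤ).subtype (· ∈ Finset.Icc c d)
  set M := ({c - 1, c, c + 1, d - 1, d, d + 1} : Finset ℤ).subtype (· ∈ Finset.Icc a b)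
  have hN : (N.card : ℝ) ≤ 4 := by
    exact_mod_cast (Finset.card_subtype_le _ _).trans Finset.card_le_four
  have hM : (M.card : ℝ) ≤ 6 := by
    exact_mod_cast (Finset.card_subtype_le _ _).trans Finset.card_le_six
  rw [cmvGreen_eq_inv_mul_cmvCoupling_mul_inv z α β β' γ γ' h hA hB hk hkab hl hlcd]
  calc _ ≤ N.card * M.card * 4 * s₁ * s₂ :=
        Matrix.norm_mul_mul_apply_le _ _ _
          (fun n i hni => cmvCoupling_apply_eq_zero z α β β' γ γ' hac hdb h n i
            (by simpa only [N, M, Finset.mem_subtype] using hni))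
          (norm_cmvCoupling_apply_le z α β β' γ γ' hz hα hβ hβ' hγ hγ' h)
          (fun n hn => hG₁ n n.2 (Finset.mem_subtype.mp hn))
          (fun m hm => hG₂ m m.2 (Finset.mem_subtype.mp hm))
    _ ≤ 4 * 6 * 4 * s₁ * s₂ := by gcongr

end
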